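/- The limit value λ is greater than or equal to the ergodic value: λ ≥ λ̄. -/

import Mathlib

/- Common framework for "On the long time convergence of potential MFG" (M. Masoero).

We work on the flat torus `𝕋^d`, modeled as `Td d := Fin d → AddCircle 1`.
Smooth functions on the torus are represented by `ℤ^d`-periodic functions on
`Vd d := Fin d → ℝ`; a function on `Vd d` is transported to the torus through the
canonical (measurable) section `secT : Td d → Vd d`.  Probability measures on the
torus are `PTd d := ProbabilityMeasure (Td d)`, endowed with the 1-Wasserstein
distance `W1` defined through Kantorovich duality.  The Fokker--Planck equations
and their stationary analogues are stated in the sense of distributions, i.e.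
against smooth periodic test functions; `σ` is the viscosity parameter
(everywhere `σ = 1` except in the non-convex example). -/

open MeasureTheory Real Set Filter

noncomputable section

abbrev Vd (d : ℕ) : Type := Fin d → ℝ
abbrev Td (d : ℕ) : Type := Fin d → AddCircle (1 : ℝ)

instance factOneposR : Fact ((0:ℝ) < 1) := ⟨one_pos⟩

/-- The canonical measurable section of the torus, with values in `[0,1)^d`. -/
def secT {d : ℕ} (y : Td d) : Vd d := fun i => ((AddCircle.equivIco 1 0) (y i)).1

/-- The vector of `ℝ^d` associated with an integer vector. -/
def intVec {d : ℕ} (z : Fin d → ℤ) : Vd d := fun i => (z i : ℝ)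

/-- Euclidean scalar product on `ℝ^d`. -/
def dotp {d : ℕ} (a b : Vd d) : ℝ := ∑ i, a i * b i

/-- Squared euclidean norm on `ℝ^d`. -/
def sqnorm {d : ℕ} (a : Vd d) : ℝ := ∑ i, (a i)^2

/-- Spatial gradient. -/
def gradv {d : ℕ} (g : Vd d → ℝ) (x : Vd d) : Vd d := fun i => fderiv ℝ g x (Pi.single i 1)

/-- Second derivative of `g` at `x` in the directions `v, w`. -/
def D2 {d : ℕ} (g : Vd d → ℝ) (x v w : Vd d) : ℝ := fderiv ℝ (fun y => fderiv ℝ g y v) x w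

/-- Laplacian. -/
def lapl {d : ℕ} (g : Vd d → ℝ) (x : Vd d) : ℝ := ∑ i, D2 g x (Pi.single i 1) (Pi.single i 1)

/-- Divergence of a vector field. -/
def divv {d : ℕ} (b : Vd d → Vd d) (x : Vd d) : ℝ :=
  ∑ i, fderiv ℝ (fun y => b y i) x (Pi.single i 1)

/-- Time derivative of a time dependent function. -/
def tderiv {d : ℕ} (u : ℝ → Vd d → ℝ) (t : ℝ) (x : Vd d) : ℝ := deriv (fun s => u s x) t

abbrev PTd (d : ℕ) := ProbabilityMeasure (Td d)

/-- The 1-Wasserstein (Monge--Kantorovich) distance, via Kantorovich duality. -/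
def W1 {d : ℕ} (μ ν : PTd d) : ℝ :=
  sSup { r | ∃ φ : Td d → ℝ, LipschitzWith 1 φ ∧
    r = (∫ y, φ y ∂(μ : Measure (Td d))) - ∫ y, φ y ∂(ν : Measure (Td d)) }

/-- The convex combination `(1-t) μ + t ν`. -/
def lineComb {d : ℕ} (t : ℝ) (μ ν : PTd d) : Measure (Td d) :=
  ENNReal.ofReal (1 - t) • (μ : Measure (Td d)) + ENNReal.ofReal t • (ν : Measure (Td d))

/-- The standing assumptions of the paper: a Hamiltonian `H` (a `ℤ^d`-periodic function of
`(x,p)`), its convex conjugate `Hstar` in the `p` variable, a `C²` coupling function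
`Fc` on `P(𝕋^d)` with flat derivative `Fd` (represented by periodic functions on `ℝ^d`),
with the regularity and growth conditions of the paper. -/
structure MFGSetting (d : ℕ) where
  H : Vd d → Vd d → ℝ
  Hstar : Vd d → Vd d → ℝ
  Fc : PTd d → ℝ
  Fd : Measure (Td d) → Vd d → ℝ
  Cbar : ℝ
  Cbar_pos : 0 < Cbar
  θ : ℝ
  θ_mem : θ ∈ Set.Ioo (0:ℝ) 1
  Cg : ℝ
  Cg_pos : 0 < Cg
  CF : ℝ
  H_smooth : ContDiff ℝ 2 (fun q : Vd d × Vd d => H q.1 q.2)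
  H_per : ∀ (x : Vd d) (z : Fin d → ℤ) (p : Vd d), H (x + intVec z) p = H x p
  Dpp_lip : ∃ L : ℝ, 0 ≤ L ∧ ∀ (x p₁ p₂ v w : Vd d),
    |D2 (fun p => H x p) p₁ v w - D2 (fun p => H x p) p₂ v w| ≤ L * ‖p₁ - p₂‖ * ‖v‖ * ‖w‖
  Dpp_lower : ∀ x p v : Vd d, Cbar⁻¹ * sqnorm v ≤ D2 (fun p' => H x p') p v v
  Dpp_upper : ∀ x p v : Vd d, D2 (fun p' => H x p') p v v ≤ Cbar * sqnorm v
  Dxx_growth : ∀ x p v w : Vd d,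
    |D2 (fun x' => H x' p) x v w| ≤ Cg * (1 + ‖p‖) ^ (1 + θ) * ‖v‖ * ‖w‖
  Dxp_growth : ∀ x p v w : Vd d,
    |fderiv ℝ (fun x' => fderiv ℝ (fun p' => H x' p') p v) x w| ≤ Cg * (1 + ‖p‖) ^ θ * ‖v‖ * ‖w‖
  Hstar_eq : ∀ x q : Vd d, IsLUB (Set.range fun p => dotp q p - H x p) (Hstar x q)
  Fd_per : ∀ (μ : Measure (Td d)) (x : Vd d) (z : Fin d → ℤ), Fd μ (x + intVec z) = Fd μ x
  Fd_smooth : ∀ μ : Measure (Td d), IsProbabilityMeasure μ → ContDiff ℝ 2 (Fd μ)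
  Fd_D2_bound : ∀ μ : Measure (Td d), IsProbabilityMeasure μ →
    ∀ x v w : Vd d, |D2 (Fd μ) x v w| ≤ CF * ‖v‖ * ‖w‖
  flat_deriv : ∀ μ ν : PTd d,
    Fc ν - Fc μ = ∫ t in Set.Icc (0:ℝ) 1,
      ((∫ y, Fd (lineComb t μ ν) (secT y) ∂(ν : Measure (Td d))) -
        ∫ y, Fd (lineComb t μ ν) (secT y) ∂(μ : Measure (Td d)))
  Fd_normalized : ∀ μ : PTd d, (∫ y, Fd (μ : Measure (Td d)) (secT y) ∂(μ : Measure (Td d))) = 0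
  Fc_bounded : ∃ M : ℝ, ∀ μ : PTd d, |Fc μ| ≤ M
  Fd_bounded : ∃ M : ℝ, ∀ (μ : PTd d) (x : Vd d), |Fd (μ : Measure (Td d)) x| ≤ M

/-- Smooth periodic test functions on `[0,∞) × 𝕋^d` (resp. `ℝ × 𝕋^d`). -/
def IsTestFun {d : ℕ} (φ : ℝ → Vd d → ℝ) : Prop :=
  ContDiff ℝ 2 (fun q : ℝ × Vd d => φ q.1 q.2) ∧
  ∀ (t : ℝ) (x : Vd d) (z : Fin d → ℤ), φ t (x + intVec z) = φ t x

/-- The weak (distributional) formulation of the Fokker--Planck equation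
`-∂ₜ m + σ Δ m + div(m α) = 0` between times `s₁` and `s₂`. -/
def FPeq {d : ℕ} (σ : ℝ) (m : ℝ → PTd d) (α : ℝ → Td d → Vd d) (s₁ s₂ : ℝ) : Prop :=
  ∀ φ : ℝ → Vd d → ℝ, IsTestFun φ →
    (∫ y, φ s₂ (secT y) ∂(m s₂ : Measure (Td d))) -
      (∫ y, φ s₁ (secT y) ∂(m s₁ : Measure (Td d))) =
    ∫ s in s₁..s₂, ∫ y, (tderiv φ s (secT y) + σ * lapl (φ s) (secT y)
        - dotp (α s y) (gradv (φ s) (secT y))) ∂(m s : Measure (Td d))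

/-- Continuity of a curve of measures with respect to the 1-Wasserstein distance. -/
def W1ContOn {d : ℕ} (m : ℝ → PTd d) (I : Set ℝ) : Prop :=
  ∀ t ∈ I, ∀ ε > 0, ∃ η > 0, ∀ s ∈ I, |s - t| < η → W1 (m s) (m t) < ε

/-- Continuity of a function on `P(𝕋^d)` with respect to the 1-Wasserstein distance. -/
def W1Continuous {d : ℕ} (χ : PTd d → ℝ) : Prop :=
  ∀ μ : PTd d, ∀ ε > 0, ∃ η > 0, ∀ ν : PTd d, W1 μ ν < η → |χ ν - χ μ| < ε

/-- W1-closed subsets of `P(𝕋^d)`. -/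
def IsClosedW1 {d : ℕ} (C : Set (PTd d)) : Prop :=
  ∀ μ : PTd d, (∀ ε > 0, ∃ ν ∈ C, W1 μ ν < ε) → μ ∈ C

/-- The running cost `∫ H*(x,α(s)) dm(s) + 𝓕(m(s))`. -/
def runCost {d : ℕ} (S : MFGSetting d) (m : ℝ → PTd d) (α : ℝ → Td d → Vd d) (s : ℝ) : ℝ :=
  (∫ y, S.Hstar (secT y) (α s y) ∂(m s : Measure (Td d))) + S.Fc (m s)

/-- Admissible pairs `(m,α)` on `[0,T]` starting from `m₀` (with `α ∈ L²_m`). -/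
def AdmOn {d : ℕ} (S : MFGSetting d) (σ : ℝ) (m₀ : PTd d) (T : ℝ)
    (m : ℝ → PTd d) (α : ℝ → Td d → Vd d) : Prop :=
  m 0 = m₀ ∧ W1ContOn m (Set.Icc 0 T) ∧
  (∀ s₁ s₂ : ℝ, 0 ≤ s₁ → s₁ ≤ s₂ → s₂ ≤ T → FPeq σ m α s₁ s₂) ∧
  Measurable (fun q : ℝ × Td d => α q.1 q.2) ∧
  (∫⁻ s in Set.Ioc (0:ℝ) T, ∫⁻ y, ENNReal.ofReal (sqnorm (α s y)) ∂(m s : Measure (Td d))) < ⊤ ∧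
  IntervalIntegrable (runCost S m α) volume 0 T

/-- Admissible pairs `(m,α)` on `[0,T]` starting from `m₀`, with `α` merely in `L¹_m`
(the class `Π_T` used for problems with prescribed endpoints). -/
def AdmOn1 {d : ℕ} (S : MFGSetting d) (σ : ℝ) (m₀ : PTd d) (T : ℝ)
    (m : ℝ → PTd d) (α : ℝ → Td d → Vd d) : Prop :=
  m 0 = m₀ ∧ W1ContOn m (Set.Icc 0 T) ∧
  (∀ s₁ s₂ : ℝ, 0 ≤ s₁ → s₁ ≤ s₂ → s₂ ≤ T → FPeq σ m α s₁ s₂) ∧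
  Measurable (fun q : ℝ × Td d => α q.1 q.2) ∧
  (∫⁻ s in Set.Ioc (0:ℝ) T, ∫⁻ y, ENNReal.ofReal (Real.sqrt (sqnorm (α s y)))
      ∂(m s : Measure (Td d))) < ⊤ ∧
  IntervalIntegrable (runCost S m α) volume 0 T

/-- The finite horizon cost. -/
def costT {d : ℕ} (S : MFGSetting d) (m : ℝ → PTd d) (α : ℝ → Td d → Vd d) (T : ℝ) : ℝ :=
  ∫ s in (0:ℝ)..T, runCost S m α s

/-- The value `𝒰(T,m₀)` of the finite horizon problem. -/
def Ufun {d : ℕ} (S : MFGSetting d) (σ : ℝ) (T : ℝ) (m₀ : PTd d) : ℝ :=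
  sInf { r | ∃ m α, AdmOn S σ m₀ T m α ∧ r = costT S m α T }

/-- Admissible pairs for the infinite horizon `δ`-discounted problem. -/
def AdmDisc {d : ℕ} (S : MFGSetting d) (σ : ℝ) (δ : ℝ) (m₀ : PTd d)
    (m : ℝ → PTd d) (α : ℝ → Td d → Vd d) : Prop :=
  m 0 = m₀ ∧ W1ContOn m (Set.Ici 0) ∧
  (∀ s₁ s₂ : ℝ, 0 ≤ s₁ → s₁ ≤ s₂ → FPeq σ m α s₁ s₂) ∧
  Measurable (fun q : ℝ × Td d => α q.1 q.2) ∧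
  (∫⁻ s in Set.Ioi (0:ℝ), ENNReal.ofReal (Real.exp (-δ * s)) *
      ∫⁻ y, ENNReal.ofReal (sqnorm (α s y)) ∂(m s : Measure (Td d))) < ⊤ ∧
  Integrable (fun s => Real.exp (-δ * s) * runCost S m α s) (volume.restrict (Set.Ioi 0))

/-- The discounted cost. -/
def costDisc {d : ℕ} (S : MFGSetting d) (δ : ℝ) (m : ℝ → PTd d) (α : ℝ → Td d → Vd d) : ℝ :=
  ∫ s in Set.Ioi (0:ℝ), Real.exp (-δ * s) * runCost S m α s

/-- The value `𝒱_δ(m₀)` of the discounted problem. -/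
def Vfun {d : ℕ} (S : MFGSetting d) (σ : ℝ) (δ : ℝ) (m₀ : PTd d) : ℝ :=
  sInf { r | ∃ m α, AdmDisc S σ δ m₀ m α ∧ r = costDisc S δ m α }

/-- `D_p H (x, p)`. -/
def DpH {d : ℕ} (S : MFGSetting d) (x p : Vd d) : Vd d :=
  fun i => fderiv ℝ (fun p' => S.H x p') p (Pi.single i 1)

/-- `C^{1,2}` regularity on `I × 𝕋^d` of a (periodic) time-dependent function. -/
def Creg12 {d : ℕ} (u : ℝ → Vd d → ℝ) (I : Set ℝ) : Prop :=
  ContinuousOn (fun q : ℝ × Vd d => u q.1 q.2) (I ×ˢ Set.univ) ∧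
  (∀ x : Vd d, ∀ t ∈ I, DifferentiableAt ℝ (fun s => u s x) t) ∧
  (∀ t ∈ I, ContDiff ℝ 2 (u t)) ∧
  (∀ t ∈ I, ∀ (x : Vd d) (z : Fin d → ℤ), u t (x + intVec z) = u t x)

/-- `(u,m)` is a classical solution of the `δ`-discounted MFG system on `[0,∞) × 𝕋^d`:
`-∂ₜ u - Δ u + δ u + H(x,Du) = F(x,m)` and `-∂ₜ m + Δ m + div(m D_pH(x,Du)) = 0`. -/
def SolvesDiscMFG {d : ℕ} (S : MFGSetting d) (δ : ℝ) (u : ℝ → Vd d → ℝ) (m : ℝ → PTd d) : Prop :=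
  Creg12 u (Set.Ici 0) ∧
  (∀ t ∈ Set.Ici (0:ℝ), ∀ x : Vd d,
    - tderiv u t x - lapl (u t) x + δ * u t x + S.H x (gradv (u t) x)
      = S.Fd (m t : Measure (Td d)) x) ∧
  W1ContOn m (Set.Ici 0) ∧
  (∀ s₁ s₂ : ℝ, 0 ≤ s₁ → s₁ ≤ s₂ →
    FPeq 1 m (fun s y => DpH S (secT y) (gradv (u s) (secT y))) s₁ s₂)

/-- Admissible pairs for the stationary (ergodic) problem:
`σ Δ m + div(m α) = 0` in the sense of distributions and `α ∈ L²_m`. -/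
def StatAdm {d : ℕ} (σ : ℝ) (m : PTd d) (α : Td d → Vd d) : Prop :=
  Measurable α ∧
  (∫⁻ y, ENNReal.ofReal (sqnorm (α y)) ∂(m : Measure (Td d))) < ⊤ ∧
  ∀ g : Vd d → ℝ, ContDiff ℝ 2 g → (∀ (x : Vd d) (z : Fin d → ℤ), g (x + intVec z) = g x) →
    (∫ y, (σ * lapl g (secT y) - dotp (α y) (gradv g (secT y))) ∂(m : Measure (Td d))) = 0

/-- `ergInf S σ = -λ̄`, the value of the stationary minimization problem. -/
def ergInf {d : ℕ} (S : MFGSetting d) (σ : ℝ) : ℝ :=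
  sInf { r | ∃ m α, StatAdm σ m α ∧
    r = (∫ y, S.Hstar (secT y) (α y) ∂(m : Measure (Td d))) + S.Fc m }

/-- The set of values over which the dynamic programming principle for a corrector
`χ` takes its infimum. -/
def DPPval {d : ℕ} (S : MFGSetting d) (σ : ℝ) (χ : PTd d → ℝ) (lam t : ℝ) (m₀ : PTd d) :
    Set ℝ :=
  { r | ∃ m α, AdmOn S σ m₀ t m α ∧
      r = (∫ s in (0:ℝ)..t, runCost S m α s) + χ (m t) + lam * t }

/-- `χ` is a corrector function: it is continuous and satisfies the dynamic
programming principle with the critical value `λ`. -/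
def IsCorrector {d : ℕ} (S : MFGSetting d) (σ : ℝ) (lam : ℝ) (χ : PTd d → ℝ) : Prop :=
  W1Continuous χ ∧ ∀ (m₀ : PTd d) (t : ℝ), 0 < t → χ m₀ = sInf (DPPval S σ χ lam t m₀)

/-- `(m,α)` is a calibrated curve (defined on all of `ℝ`). -/
def IsCalibrated {d : ℕ} (S : MFGSetting d) (σ : ℝ) (lam : ℝ)
    (m : ℝ → PTd d) (α : ℝ → Td d → Vd d) : Prop :=
  W1ContOn m Set.univ ∧
  (∀ s₁ s₂ : ℝ, s₁ ≤ s₂ → FPeq σ m α s₁ s₂) ∧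
  Measurable (fun q : ℝ × Td d => α q.1 q.2) ∧
  (∀ t₁ t₂ : ℝ, (∫⁻ s in Set.Ioc t₁ t₂,
      ∫⁻ y, ENNReal.ofReal (sqnorm (α s y)) ∂(m s : Measure (Td d))) < ⊤) ∧
  (∀ t₁ t₂ : ℝ, IntervalIntegrable (runCost S m α) volume t₁ t₂) ∧
  ∃ χ : PTd d → ℝ, IsCorrector S σ lam χ ∧ ∀ t₁ t₂ : ℝ, t₁ < t₂ →
    χ (m t₁) = lam * (t₂ - t₁) + (∫ s in t₁..t₂, runCost S m α s) + χ (m t₂)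

/-- The projected Mather set. -/
def MatherSet {d : ℕ} (S : MFGSetting d) (σ : ℝ) (lam : ℝ) : Set (PTd d) :=
  { μ | ∃ m α, IsCalibrated S σ lam m α ∧ m 0 = μ }

/-- Invariant subsets of the projected Mather set. -/
def IsInvariantMFG {d : ℕ} (S : MFGSetting d) (σ : ℝ) (lam : ℝ) (C : Set (PTd d)) : Prop :=
  ∀ μ ∈ C, ∃ m α, IsCalibrated S σ lam m α ∧ m 0 = μ ∧ ∀ t : ℝ, m t ∈ C

/-- Minimal invariant subsets of the projected Mather set. -/
def IsMinimalInvariant {d : ℕ} (S : MFGSetting d) (σ : ℝ) (lam : ℝ) (N : Set (PTd d)) : Prop :=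
  N.Nonempty ∧ N ⊆ MatherSet S σ lam ∧ IsClosedW1 N ∧ IsInvariantMFG S σ lam N ∧
  ∀ C : Set (PTd d), C ⊆ N → C.Nonempty → IsClosedW1 C → IsInvariantMFG S σ lam C → C = N

/-- `δ 𝒱_δ → -λ` uniformly as `δ → 0⁺`. -/
def IsLimitValueV {d : ℕ} (S : MFGSetting d) (σ : ℝ) (lam : ℝ) : Prop :=
  ∀ ε > 0, ∃ δ₀ > 0, ∀ δ : ℝ, 0 < δ → δ ≤ δ₀ → ∀ μ : PTd d,
    |δ * Vfun S σ δ μ - (-lam)| < ε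

/-- `𝒰(T,·)/T → -λ` uniformly as `T → ∞`. -/
def IsLimitValueU {d : ℕ} (S : MFGSetting d) (σ : ℝ) (lam : ℝ) : Prop :=
  ∀ ε > 0, ∃ T₀ : ℝ, ∀ T : ℝ, T₀ ≤ T → ∀ μ : PTd d,
    |Ufun S σ T μ / T - (-lam)| < ε

/-- A function `Φ` on `P(𝕋^d)` is `C¹` with flat derivative `dΦ` (normalized so that
`∫ dΦ(m,·) dm = 0`, periodic in the space variable and jointly continuous). -/
def IsC1Flat {d : ℕ} (Φ : PTd d → ℝ) (dΦ : Measure (Td d) → Vd d → ℝ) : Prop :=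
  (∀ (μ : Measure (Td d)) (x : Vd d) (z : Fin d → ℤ), dΦ μ (x + intVec z) = dΦ μ x) ∧
  (∀ μ ν : PTd d,
    Φ ν - Φ μ = ∫ t in Set.Icc (0:ℝ) 1,
      ((∫ y, dΦ (lineComb t μ ν) (secT y) ∂(ν : Measure (Td d))) -
        ∫ y, dΦ (lineComb t μ ν) (secT y) ∂(μ : Measure (Td d)))) ∧
  (∀ μ : PTd d, (∫ y, dΦ (μ : Measure (Td d)) (secT y) ∂(μ : Measure (Td d))) = 0) ∧
  (∀ ε > 0, ∀ (μ : PTd d) (x : Vd d), ∃ η > 0, ∀ (ν : PTd d) (x' : Vd d),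
    W1 μ ν < η → ‖x' - x‖ < η → |dΦ (ν : Measure (Td d)) x' - dΦ (μ : Measure (Td d)) x| < ε)
section Helpers

variable {d : ℕ}

/-- The unit box. -/
def box (d : ℕ) : Set (Vd d) := Set.univ.pi fun _ => Set.Ico (0:ℝ) 1

lemma secT_mem_box (y : Td d) : secT y ∈ box d := by
  intro i _
  simpa [secT] using ((AddCircle.equivIco 1 0) (y i)).2

lemma box_subset_Icc : box d ⊆ Set.Icc (0 : Vd d) 1 := by
  intro x hx
  constructor <;> intro i
  · exact (hx i (Set.mem_univ i)).1
  · exact le_of_lt (hx i (Set.mem_univ i)).2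

lemma isCompact_box_Icc : IsCompact (Set.Icc (0 : Vd d) 1) := isCompact_Icc

lemma measurable_secT : Measurable (secT (d := d)) := by
  apply measurable_pi_lambda
  intro i
  exact (measurable_subtype_coe.comp (AddCircle.measurableEquivIco 1 0).measurable).comp
    (measurable_pi_apply i)

lemma contDiff_fderiv_apply {g : Vd d → ℝ} (hg : ContDiff ℝ 2 g) (v : Vd d) :
    ContDiff ℝ 1 fun x => fderiv ℝ g x v := by
  have h1 : ContDiff ℝ 1 (fderiv ℝ g) := hg.fderiv_right (le_refl _)
  exact (ContinuousLinearMap.apply ℝ ℝ v).contDiff.comp h1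

lemma continuous_D2 {g : Vd d → ℝ} (hg : ContDiff ℝ 2 g) (v w : Vd d) :
    Continuous fun x => D2 g x v w := by
  have h1 : ContDiff ℝ 1 fun x => fderiv ℝ g x v := contDiff_fderiv_apply hg v
  have h2 : Continuous (fderiv ℝ fun x => fderiv ℝ g x v) := h1.continuous_fderiv one_ne_zero
  exact h2.clm_apply continuous_const

lemma continuous_lapl {g : Vd d → ℝ} (hg : ContDiff ℝ 2 g) : Continuous (lapl g) :=
  continuous_finset_sum _ fun i _ => continuous_D2 hg _ _

lemma continuous_gradv_apply {g : Vd d → ℝ} (hg : ContDiff ℝ 2 g) (i : Fin d) :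
    Continuous fun x => gradv g x i :=
  (contDiff_fderiv_apply hg (Pi.single i 1)).continuous

lemma continuous_sqnorm_gradv {g : Vd d → ℝ} (hg : ContDiff ℝ 2 g) :
    Continuous fun x => sqnorm (gradv g x) :=
  continuous_finset_sum _ fun i _ => ((continuous_gradv_apply hg i).pow 2)

lemma fderiv_periodic {g : Vd d → ℝ} (hg : ContDiff ℝ 2 g)
    (hper : ∀ (x : Vd d) (z : Fin d → ℤ), g (x + intVec z) = g x)
    (x : Vd d) (z : Fin d → ℤ) (v : Vd d) :
    fderiv ℝ g (x + intVec z) v = fderiv ℝ g x v := by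
  have hdiff : Differentiable ℝ g := hg.differentiable two_ne_zero
  have h1 : HasFDerivAt (fun y => g (y + intVec z)) (fderiv ℝ g (x + intVec z)) x := by
    have := (hdiff (x + intVec z)).hasFDerivAt
    have hid : HasFDerivAt (fun y : Vd d => y + intVec z)
        (ContinuousLinearMap.id ℝ (Vd d)) x := (hasFDerivAt_id x).add_const _
    exact this.comp x hid
  have h2 : (fun y => g (y + intVec z)) = g := funext fun y => hper y z
  rw [h2] at h1
  rw [h1.fderiv]

end Helpers
section MeasureHelpers

variable {d : ℕ}

/-- The reference measure on the box. -/
def rho : Measure ℝ := volume.restrict (Set.Ico (0:ℝ) 1)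

instance : IsProbabilityMeasure (rho) := by
  constructor
  rw [rho, Measure.restrict_apply_univ]
  simp

/-- The product measure on the box `[0,1)^d`. -/
def piRho (d : ℕ) : Measure (Vd d) := Measure.pi fun _ => rho

instance : IsProbabilityMeasure (piRho d) := by
  unfold piRho; infer_instance

instance : IsProbabilityMeasure (volume : Measure (AddCircle (1:ℝ))) := by
  constructor
  rw [AddCircle.measure_univ]
  simp

lemma measurePreserving_coord :
    MeasurePreserving (fun c : AddCircle (1:ℝ) => ((AddCircle.equivIco 1 0) c).1)
      volume rho := by
  have hmeas : Measurable (fun c : AddCircle (1:ℝ) => ((AddCircle.equivIco 1 0) c).1) :=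
    measurable_subtype_coe.comp (AddCircle.measurableEquivIco 1 0).measurable
  refine ⟨hmeas, ?_⟩
  have hmk : MeasurePreserving (((↑) : ℝ → AddCircle (1:ℝ)))
      (volume.restrict (Set.Ioc (0:ℝ) 1)) volume := by
    simpa using AddCircle.measurePreserving_mk 1 0
  have hIocIco : (volume.restrict (Set.Ioc (0:ℝ) 1)) = volume.restrict (Set.Ico (0:ℝ) 1) := by
    refine Measure.restrict_congr_set ?_
    exact ((Ioo_ae_eq_Ioc' (measure_singleton 1)).symm.trans (Ioo_ae_eq_Ico' (measure_singleton 0)))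
  have h1 : (volume : Measure (AddCircle (1:ℝ)))
      = Measure.map ((↑) : ℝ → AddCircle (1:ℝ)) rho := by
    rw [← hmk.map_eq, hIocIco]; rfl
  rw [h1, Measure.map_map hmeas AddCircle.measurable_mk']
  have : (fun x : ℝ => ((AddCircle.equivIco 1 0) ((x : AddCircle (1:ℝ)))).1)
      =ᵐ[rho] id := by
    have : ∀ᵐ x ∂rho, x ∈ Set.Ico (0:ℝ) 1 := ae_restrict_mem measurableSet_Ico
    filter_upwards [this] with x hx
    simp only [AddCircle.coe_equivIco_mk_apply, id_eq, div_one, mul_one]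
    exact Int.fract_eq_self.2 ⟨hx.1, hx.2⟩
  rw [show ((fun c : AddCircle (1:ℝ) => ((AddCircle.equivIco 1 0) c).1) ∘ (QuotientAddGroup.mk : ℝ → AddCircle (1:ℝ))) = fun x : ℝ => ((AddCircle.equivIco 1 0) ((x : AddCircle (1:ℝ)))).1 from rfl, Measure.map_congr this, Measure.map_id]

lemma measurePreserving_secT :
    MeasurePreserving (secT (d := d)) volume (piRho d) := by
  have : (volume : Measure (Td d)) = Measure.pi fun _ => (volume : Measure (AddCircle (1:ℝ))) :=
    rfl
  rw [this]
  exact measurePreserving_pi _ _ fun i => measurePreserving_coord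

end MeasureHelpers
section LaplHelpers

variable {d : ℕ}

lemma ae_mem_box_piRho : ∀ᵐ x ∂(piRho d), x ∈ box d := by
  have hmeas : MeasurableSet (box d) := MeasurableSet.univ_pi fun _ => measurableSet_Ico
  have hbox : piRho d (box d) = 1 := by
    rw [piRho, box, Measure.pi_pi]
    simp [rho]
  have hcompl : piRho d (box d)ᶜ = 0 := by
    rw [measure_compl hmeas (measure_ne_top _ _), hbox, measure_univ, tsub_self]
  rw [ae_iff]
  exact hcompl

lemma integrable_piRho_of_continuous {f : Vd d → ℝ} (hf : Continuous f) :
    Integrable f (piRho d) := by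
  obtain ⟨C, hC⟩ := isCompact_box_Icc.exists_bound_of_continuousOn hf.continuousOn
  refine Integrable.mono' (integrable_const C) hf.aestronglyMeasurable ?_
  filter_upwards [ae_mem_box_piRho] with x hx
  exact hC x (box_subset_Icc hx)

lemma integral_D2_coord {n : ℕ} {g : Vd (n+1) → ℝ} (hg : ContDiff ℝ 2 g)
    (hper : ∀ (x : Vd (n+1)) (z : Fin (n+1) → ℤ), g (x + intVec z) = g x) (i : Fin (n+1)) :
    ∫ x, D2 g x (Pi.single i 1) (Pi.single i 1) ∂(piRho (n+1)) = 0 := by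
  set ei : Vd (n+1) := Pi.single i 1 with hei
  set F : Vd (n+1) → ℝ := fun x => D2 g x ei ei with hF
  have hFc : Continuous F := continuous_D2 hg ei ei
  have hFint : Integrable F (piRho (n+1)) := integrable_piRho_of_continuous hFc
  set e := MeasurableEquiv.piFinSuccAbove (fun _ : Fin (n+1) => ℝ) i with he
  have hmp := measurePreserving_piFinSuccAbove (fun _ : Fin (n+1) => rho) i
  have hsymm : MeasurePreserving e.symm (rho.prod (piRho n)) (piRho (n+1)) := hmp.symm
  have hcomp : Integrable (F ∘ e.symm) (rho.prod (piRho n)) :=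
    (hsymm.integrable_comp_emb e.symm.measurableEmbedding).2 hFint
  have hes : ∀ z : ℝ × (Fin n → ℝ), e.symm z = i.insertNth z.1 z.2 := fun z => rfl
  have h1 : ∫ x, F x ∂(piRho (n+1)) = ∫ z, F (e.symm z) ∂(rho.prod (piRho n)) :=
    (hsymm.integral_comp' F).symm
  have hcomp' : Integrable (Function.uncurry fun t r => F (i.insertNth t r))
      (rho.prod (piRho n)) := by
    have : (Function.uncurry fun t r => F (i.insertNth t r)) = F ∘ e.symm := by
      funext z; simp [Function.uncurry, hes]
    rw [this]; exact hcomp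
  have h2 : ∫ z, F (e.symm z) ∂(rho.prod (piRho n))
      = ∫ t, ∫ r, F (i.insertNth t r) ∂(piRho n) ∂rho := by
    have hz : ∀ z : ℝ × (Fin n → ℝ), F (e.symm z) = Function.uncurry (fun t r => F (i.insertNth t r)) z := by
      intro z; simp [Function.uncurry, hes]
    simp only [hz]
    exact MeasureTheory.integral_prod _ hcomp'
  have h3 : ∫ t, ∫ r, F (i.insertNth t r) ∂(piRho n) ∂rho
      = ∫ r, ∫ t, F (i.insertNth t r) ∂rho ∂(piRho n) :=
    MeasureTheory.integral_integral_swap hcomp'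
  -- inner integral vanishes by FTC and periodicity
  have hinner : ∀ r : Fin n → ℝ, ∫ t, F (i.insertNth t r) ∂rho = 0 := by
    intro r
    have hins : ∀ t : ℝ, i.insertNth t r = i.insertNth 0 r + t • ei := by
      intro t
      funext j
      refine Fin.succAboveCases i ?_ ?_ j
      · simp [hei, Pi.single_eq_same]
      · intro k
        simp [hei, Pi.single_eq_of_ne (Fin.succAbove_ne i k)]
    set c : Vd (n+1) := i.insertNth 0 r with hc
    have hline : ∀ t : ℝ, HasDerivAt (fun s : ℝ => c + s • ei) ei t := by
      intro t
      have h := ((hasDerivAt_id t).smul_const ei).const_add c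
      simpa using h
    have hP : ContDiff ℝ 1 fun x => fderiv ℝ g x ei := contDiff_fderiv_apply hg ei
    have hq : ∀ t : ℝ, HasDerivAt (fun s : ℝ => fderiv ℝ g (c + s • ei) ei)
        (D2 g (c + t • ei) ei ei) t := by
      intro t
      have hPd : HasFDerivAt (fun x => fderiv ℝ g x ei)
          (fderiv ℝ (fun x => fderiv ℝ g x ei) (c + t • ei)) (c + t • ei) :=
        ((hP.differentiable one_ne_zero) (c + t • ei)).hasFDerivAt
      have := hPd.comp_hasDerivAt t (hline t)
      exact this
    have hcontD : Continuous fun t : ℝ => D2 g (c + t • ei) ei ei :=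
      (continuous_D2 hg ei ei).comp (continuous_const.add (continuous_id.smul continuous_const))
    have hFTC : ∫ t in (0:ℝ)..1, D2 g (c + t • ei) ei ei
        = fderiv ℝ g (c + (1:ℝ) • ei) ei - fderiv ℝ g (c + (0:ℝ) • ei) ei :=
      intervalIntegral.integral_eq_sub_of_hasDerivAt (fun t _ => hq t)
        (hcontD.intervalIntegrable 0 1)
    have hei_int : ei = intVec (Pi.single i (1:ℤ)) := by
      funext j
      rcases eq_or_ne j i with hj | hj
      · subst hj; simp [hei, intVec]
      · simp [hei, intVec, Pi.single_eq_of_ne hj]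
    have hendpoints : fderiv ℝ g (c + (1:ℝ) • ei) ei - fderiv ℝ g (c + (0:ℝ) • ei) ei = 0 := by
      rw [one_smul, zero_smul, add_zero, hei_int]
      rw [fderiv_periodic hg hper c (Pi.single i 1) (intVec (Pi.single i (1:ℤ)))]
      · rw [← hei_int, sub_self]
    have hrho : ∫ t, F (i.insertNth t r) ∂rho = ∫ t in (0:ℝ)..1, D2 g (c + t • ei) ei ei := by
      rw [intervalIntegral.integral_of_le zero_le_one]
      rw [show (rho : Measure ℝ) = volume.restrict (Set.Ico (0:ℝ) 1) from rfl]
      rw [integral_Ico_eq_integral_Ioo, ← integral_Ioc_eq_integral_Ioo]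
      refine setIntegral_congr_fun measurableSet_Ioc ?_
      intro t _
      simp only [hF, hins t]
    rw [hrho, hFTC, hendpoints]
  rw [h1, h2, h3]
  simp only [hinner, integral_zero]

lemma integral_lapl_piRho {g : Vd d → ℝ} (hg : ContDiff ℝ 2 g)
    (hper : ∀ (x : Vd d) (z : Fin d → ℤ), g (x + intVec z) = g x) :
    ∫ x, lapl g x ∂(piRho d) = 0 := by
  have : ∫ x, lapl g x ∂(piRho d)
      = ∑ i : Fin d, ∫ x, D2 g x (Pi.single i 1) (Pi.single i 1) ∂(piRho d) := by
    rw [← integral_finset_sum]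
    · rfl
    · intro i _
      exact integrable_piRho_of_continuous (continuous_D2 hg _ _)
  rw [this]
  cases d with
  | zero => exact Finset.sum_of_isEmpty _
  | succ n =>
    refine Finset.sum_eq_zero fun i _ => integral_D2_coord hg hper i

lemma integral_lapl_secT {g : Vd d → ℝ} (hg : ContDiff ℝ 2 g)
    (hper : ∀ (x : Vd d) (z : Fin d → ℤ), g (x + intVec z) = g x) :
    ∫ y, lapl g (secT y) ∂(volume : Measure (Td d)) = 0 := by
  have hmp := measurePreserving_secT (d := d)
  have hint := MeasureTheory.integral_map (μ := (volume : Measure (Td d)))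
    measurable_secT.aemeasurable ((continuous_lapl hg).aestronglyMeasurable (μ := Measure.map secT volume))
  rw [hmp.map_eq] at hint
  rw [← hint]
  exact integral_lapl_piRho hg hper

end LaplHelpers
section FPConst

variable {d : ℕ}

lemma contDiff_slice {φ : ℝ → Vd d → ℝ} (h : ContDiff ℝ 2 fun q : ℝ × Vd d => φ q.1 q.2)
    (s : ℝ) : ContDiff ℝ 2 (φ s) :=
  h.comp (contDiff_const.prodMk contDiff_id)

lemma hasDerivAt_slice {φ : ℝ → Vd d → ℝ} (h : ContDiff ℝ 2 fun q : ℝ × Vd d => φ q.1 q.2)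
    (t : ℝ) (x : Vd d) :
    HasDerivAt (fun s => φ s x)
      (fderiv ℝ (fun q : ℝ × Vd d => φ q.1 q.2) (t, x) (1, 0)) t := by
  have hd : HasFDerivAt (fun q : ℝ × Vd d => φ q.1 q.2)
      (fderiv ℝ (fun q : ℝ × Vd d => φ q.1 q.2) (t, x)) (t, x) :=
    ((h.differentiable two_ne_zero) (t, x)).hasFDerivAt
  have hline : HasDerivAt (fun s : ℝ => ((s, x) : ℝ × Vd d)) ((1:ℝ), (0:Vd d)) t :=
    (hasDerivAt_id t).prodMk (hasDerivAt_const t x)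
  exact hd.comp_hasDerivAt t hline

lemma integrable_comp_secT {μ : Measure (Td d)} [IsProbabilityMeasure μ] {f : Vd d → ℝ}
    (hf : Continuous f) : Integrable (fun y => f (secT y)) μ := by
  obtain ⟨C, hC⟩ := isCompact_box_Icc.exists_bound_of_continuousOn hf.continuousOn
  exact Integrable.mono' (integrable_const C)
    ((hf.measurable.comp measurable_secT).aestronglyMeasurable)
    (ae_of_all _ fun y => hC _ (box_subset_Icc (secT_mem_box y)))

lemma measurable_sqnorm_comp {α : Td d → Vd d} (hα : Measurable α) :
    Measurable fun y => sqnorm (α y) := by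
  unfold sqnorm
  exact Finset.measurable_sum _ fun i _ => ((measurable_pi_apply i).comp hα).pow_const 2

lemma sqnorm_nonneg (a : Vd d) : 0 ≤ sqnorm a :=
  Finset.sum_nonneg fun i _ => sq_nonneg _

lemma integrable_sqnorm {μ : Measure (Td d)} [IsProbabilityMeasure μ] {α : Td d → Vd d}
    (hα : Measurable α) (hfin : (∫⁻ y, ENNReal.ofReal (sqnorm (α y)) ∂μ) < ⊤) :
    Integrable (fun y => sqnorm (α y)) μ := by
  refine ⟨(measurable_sqnorm_comp hα).aestronglyMeasurable, ?_⟩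
  rw [hasFiniteIntegral_iff_ofReal (ae_of_all _ fun y => sqnorm_nonneg _)]
  exact hfin

lemma abs_dotp_le (a b : Vd d) : |dotp a b| ≤ (sqnorm a + sqnorm b) / 2 := by
  unfold dotp sqnorm
  calc |∑ i, a i * b i| ≤ ∑ i, |a i * b i| := Finset.abs_sum_le_sum_abs _ _
    _ ≤ ∑ i, (a i ^ 2 + b i ^ 2) / 2 := by
        refine Finset.sum_le_sum fun i _ => ?_
        rw [abs_mul]
        nlinarith [sq_nonneg (|a i| - |b i|), sq_abs (a i), sq_abs (b i), abs_nonneg (a i),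
          abs_nonneg (b i)]
    _ = (∑ i, (a i) ^ 2 + ∑ i, (b i) ^ 2) / 2 := by
        rw [← Finset.sum_div, Finset.sum_add_distrib]

lemma FPeq_const {m : PTd d} {α : Td d → Vd d} (h : StatAdm 1 m α) {s₁ s₂ : ℝ} (hle : s₁ ≤ s₂) :
    FPeq 1 (fun _ => m) (fun _ y => α y) s₁ s₂ := by
  obtain ⟨hαmeas, hαL2, hstat⟩ := h
  intro φ hφ
  obtain ⟨hΦ, hper⟩ := hφ
  set μ : Measure (Td d) := (m : Measure (Td d)) with hμ
  set G : ℝ → Vd d → ℝ :=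
    fun t x => fderiv ℝ (fun q : ℝ × Vd d => φ q.1 q.2) (t, x) (1, 0) with hG
  have hGcont : Continuous fun q : ℝ × Vd d => G q.1 q.2 :=
    (hΦ.continuous_fderiv two_ne_zero).clm_apply continuous_const
  have hderiv : ∀ (t : ℝ) (x : Vd d), HasDerivAt (fun s => φ s x) (G t x) t :=
    fun t x => hasDerivAt_slice hΦ t x
  have htd : ∀ (t : ℝ) (x : Vd d), tderiv φ t x = G t x := fun t x => (hderiv t x).deriv
  have hsliceC2 : ∀ s : ℝ, ContDiff ℝ 2 (φ s) := contDiff_slice hΦ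
  have hGsc : ∀ s : ℝ, Continuous (G s) :=
    fun s => hGcont.comp (continuous_const.prodMk continuous_id)
  have hA : ∀ s : ℝ, Integrable (fun y => G s (secT y)) μ :=
    fun s => integrable_comp_secT (hGsc s)
  have hB : ∀ s : ℝ, Integrable (fun y => 1 * lapl (φ s) (secT y)) μ :=
    fun s => integrable_comp_secT (continuous_const.mul (continuous_lapl (hsliceC2 s)))
  have hC : ∀ s : ℝ, Integrable (fun y => dotp (α y) (gradv (φ s) (secT y))) μ := by
    intro s
    obtain ⟨K, hK⟩ := isCompact_box_Icc.exists_bound_of_continuousOn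
      (continuous_sqnorm_gradv (hsliceC2 s)).continuousOn
    have hmeas : Measurable fun y => dotp (α y) (gradv (φ s) (secT y)) := by
      unfold dotp
      exact Finset.measurable_sum _ fun i _ =>
        ((measurable_pi_apply i).comp hαmeas).mul
          ((continuous_gradv_apply (hsliceC2 s) i).measurable.comp measurable_secT)
    refine Integrable.mono' (((integrable_sqnorm hαmeas hαL2).add (integrable_const K)).div_const 2)
      hmeas.aestronglyMeasurable (ae_of_all _ fun y => ?_)
    calc ‖dotp (α y) (gradv (φ s) (secT y))‖
        ≤ (sqnorm (α y) + sqnorm (gradv (φ s) (secT y))) / 2 := abs_dotp_le _ _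
      _ ≤ (sqnorm (α y) + K) / 2 := by
          have h1 := hK _ (box_subset_Icc (secT_mem_box y))
          have h2 : sqnorm (gradv (φ s) (secT y)) ≤ K := (le_abs_self _).trans h1
          linarith
  have hIs : ∀ s : ℝ, (∫ y, (tderiv φ s (secT y) + 1 * lapl (φ s) (secT y)
        - dotp (α y) (gradv (φ s) (secT y))) ∂μ) = ∫ y, G s (secT y) ∂μ := by
    intro s
    have hrw : (fun y => tderiv φ s (secT y) + 1 * lapl (φ s) (secT y)
        - dotp (α y) (gradv (φ s) (secT y)))
        = fun y => G s (secT y) + (1 * lapl (φ s) (secT y)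
            - dotp (α y) (gradv (φ s) (secT y))) := by
      funext y; rw [htd]; ring
    have hBC : Integrable (fun y => 1 * lapl (φ s) (secT y)
        - dotp (α y) (gradv (φ s) (secT y))) μ := (hB s).sub (hC s)
    rw [hrw, integral_add (hA s) hBC,
      hstat (φ s) (hsliceC2 s) (fun x z => hper s x z), add_zero]
  set ν : Measure ℝ := volume.restrict (Set.Ioc s₁ s₂) with hν
  haveI : IsFiniteMeasure ν := ⟨by rw [Measure.restrict_apply_univ]; exact measure_Ioc_lt_top⟩
  have hswap_int : Integrable (Function.uncurry fun s y => G s (secT y)) (ν.prod μ) := by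
    obtain ⟨C, hC⟩ := ((isCompact_Icc (a := s₁) (b := s₂)).prod isCompact_box_Icc).exists_bound_of_continuousOn hGcont.continuousOn
    have hmeas : Measurable fun z : ℝ × Td d => G z.1 (secT z.2) :=
      hGcont.measurable.comp (measurable_fst.prodMk (measurable_secT.comp measurable_snd))
    have h1 : ∀ᵐ z ∂(ν.prod μ), z.1 ∈ Set.Ioc s₁ s₂ := by
      rw [ae_iff]
      refine measure_mono_null (fun z hz => ?_) (?_ : ν.prod μ ((Set.Ioc s₁ s₂)ᶜ ×ˢ Set.univ) = 0)
      · exact ⟨hz, Set.mem_univ _⟩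
      · rw [Measure.prod_prod, Measure.restrict_apply measurableSet_Ioc.compl]
        simp
    refine Integrable.mono' (integrable_const C) hmeas.aestronglyMeasurable ?_
    filter_upwards [h1] with z hz
    exact hC (z.1, secT z.2) ⟨Set.Ioc_subset_Icc_self hz, box_subset_Icc (secT_mem_box z.2)⟩
  have hswap := MeasureTheory.integral_integral_swap (f := fun s y => G s (secT y)) hswap_int
  have hFTC : ∀ y : Td d, (∫ s, G s (secT y) ∂ν) = φ s₂ (secT y) - φ s₁ (secT y) := by
    intro y
    have : (∫ s, G s (secT y) ∂ν) = ∫ s in s₁..s₂, G s (secT y) :=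
      (intervalIntegral.integral_of_le hle).symm
    rw [this]
    exact intervalIntegral.integral_eq_sub_of_hasDerivAt (fun t _ => hderiv t (secT y))
      ((hGcont.comp (continuous_id.prodMk continuous_const)).intervalIntegrable s₁ s₂)
  calc (∫ y, φ s₂ (secT y) ∂μ) - ∫ y, φ s₁ (secT y) ∂μ
      = ∫ y, (φ s₂ (secT y) - φ s₁ (secT y)) ∂μ :=
        (integral_sub (integrable_comp_secT (hsliceC2 s₂).continuous)
          (integrable_comp_secT (hsliceC2 s₁).continuous)).symm
    _ = ∫ y, ∫ s, G s (secT y) ∂ν ∂μ := by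
        refine integral_congr_ae (ae_of_all _ fun y => ?_)
        exact (hFTC y).symm
    _ = ∫ s, ∫ y, G s (secT y) ∂μ ∂ν := hswap.symm
    _ = ∫ s in s₁..s₂, ∫ y, G s (secT y) ∂μ := (intervalIntegral.integral_of_le hle).symm
    _ = ∫ s in s₁..s₂, ∫ y, (tderiv φ s (secT y) + 1 * lapl (φ s) (secT y)
          - dotp (α y) (gradv (φ s) (secT y))) ∂μ := by
        refine intervalIntegral.integral_congr fun s _ => (hIs s).symm

end FPConst
section MainHelpers

variable {d : ℕ}

lemma W1_self (μ : PTd d) : W1 μ μ = 0 := by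
  unfold W1
  have hs : { r | ∃ φ : Td d → ℝ, LipschitzWith 1 φ ∧
      r = (∫ y, φ y ∂(μ : Measure (Td d))) - ∫ y, φ y ∂(μ : Measure (Td d)) } = {0} := by
    ext r
    constructor
    · rintro ⟨φ, hφ, hr⟩
      simp [hr]
    · rintro rfl
      exact ⟨fun _ => 0, (LipschitzWith.const 0).weaken zero_le_one, by simp⟩
  rw [hs, csSup_singleton]

lemma Hstar_lb (S : MFGSetting d) : ∃ B : ℝ, 0 ≤ B ∧
    ∀ (μ : Measure (Td d)), IsProbabilityMeasure μ → ∀ β : Td d → Vd d,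
      -B ≤ ∫ y, S.Hstar (secT y) (β y) ∂μ := by
  have hcont : Continuous fun x : Vd d => S.H x 0 :=
    S.H_smooth.continuous.comp (continuous_id.prodMk continuous_const)
  obtain ⟨B0, hB0⟩ := isCompact_box_Icc.exists_bound_of_continuousOn hcont.continuousOn
  refine ⟨max B0 0, le_max_right _ _, fun μ hμ β => ?_⟩
  have hpt : ∀ y : Td d, -(max B0 0) ≤ S.Hstar (secT y) (β y) := by
    intro y
    have hlub := S.Hstar_eq (secT y) (β y)
    have hle := hlub.1 (Set.mem_range_self (0 : Vd d))
    have hd : dotp (β y) (0 : Vd d) = 0 := by simp [dotp]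
    have hH : |S.H (secT y) 0| ≤ B0 := by
      simpa using hB0 _ (box_subset_Icc (secT_mem_box y))
    have h1 : -B0 ≤ -(S.H (secT y) 0) := by
      have := (abs_le.mp hH).2; linarith
    have h2 : (0:ℝ) - S.H (secT y) 0 ≤ S.Hstar (secT y) (β y) := by
      rw [← hd]; exact hle
    have h3 : -(max B0 0) ≤ -B0 := by
      simp [neg_le_neg_iff, le_max_left]
    linarith
  by_cases hint : Integrable (fun y => S.Hstar (secT y) (β y)) μ
  · calc -(max B0 0) = ∫ _y, (-(max B0 0) : ℝ) ∂μ := by simp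
      _ ≤ ∫ y, S.Hstar (secT y) (β y) ∂μ := integral_mono (integrable_const _) hint hpt
  · rw [integral_undef hint]
    exact neg_nonpos.mpr (le_max_right _ _)

lemma adm_const (S : MFGSetting d) {m : PTd d} {α : Td d → Vd d} (h : StatAdm 1 m α)
    {T : ℝ} (hT : 0 ≤ T) : AdmOn S 1 m T (fun _ => m) (fun _ y => α y) := by
  refine ⟨rfl, ?_, ?_, ?_, ?_, ?_⟩
  · intro t _ ε hε
    exact ⟨1, one_pos, fun s _ _ => by rw [W1_self]; exact hε⟩
  · intro s₁ s₂ _ h2 _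
    exact FPeq_const h h2
  · exact h.1.comp measurable_snd
  · have hconst : ∀ s : ℝ, (∫⁻ y, ENNReal.ofReal (sqnorm (α y)) ∂((fun _ : ℝ => m) s : Measure (Td d)))
        = ∫⁻ y, ENNReal.ofReal (sqnorm (α y)) ∂(m : Measure (Td d)) := fun s => rfl
    calc (∫⁻ s in Set.Ioc (0:ℝ) T, ∫⁻ y, ENNReal.ofReal (sqnorm (α y))
          ∂((fun _ : ℝ => m) s : Measure (Td d)))
        = (∫⁻ y, ENNReal.ofReal (sqnorm (α y)) ∂(m : Measure (Td d)))
            * volume (Set.Ioc (0:ℝ) T) := by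
          rw [MeasureTheory.setLIntegral_const]
      _ < ⊤ := ENNReal.mul_lt_top h.2.1 measure_Ioc_lt_top
  · have : runCost S (fun _ => m) (fun _ y => α y)
        = fun _ : ℝ => (∫ y, S.Hstar (secT y) (α y) ∂(m : Measure (Td d))) + S.Fc m := rfl
    rw [this]
    exact intervalIntegrable_const

lemma Ufun_le_const (S : MFGSetting d) {m : PTd d} {α : Td d → Vd d} (h : StatAdm 1 m α)
    {T : ℝ} (hT : 0 ≤ T) :
    Ufun S 1 T m ≤ T * ((∫ y, S.Hstar (secT y) (α y) ∂(m : Measure (Td d))) + S.Fc m) := by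
  set c : ℝ := (∫ y, S.Hstar (secT y) (α y) ∂(m : Measure (Td d))) + S.Fc m with hc
  obtain ⟨B, hB0, hB⟩ := Hstar_lb S
  obtain ⟨M0, hM0⟩ := S.Fc_bounded
  have hlb : ∀ r ∈ { r | ∃ m' α', AdmOn S 1 m T m' α' ∧ r = costT S m' α' T },
      -(B + M0) * T ≤ r := by
    rintro r ⟨m', α', hadm, rfl⟩
    have hrun : ∀ s ∈ Set.Icc (0:ℝ) T, -(B + M0) ≤ runCost S m' α' s := by
      intro s _
      have h1 := hB (m' s : Measure (Td d)) inferInstance (α' s)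
      have h2 : -M0 ≤ S.Fc (m' s) := by
        have := (abs_le.mp (hM0 (m' s))).1; linarith
      have : runCost S m' α' s
          = (∫ y, S.Hstar (secT y) (α' s y) ∂(m' s : Measure (Td d))) + S.Fc (m' s) := rfl
      rw [this]; linarith
    calc -(B + M0) * T = ∫ _s in (0:ℝ)..T, (-(B + M0) : ℝ) := by
          rw [intervalIntegral.integral_const]; rw [smul_eq_mul]; ring
      _ ≤ costT S m' α' T := intervalIntegral.integral_mono_on hT
          intervalIntegrable_const hadm.2.2.2.2.2 hrun
  have hmem : T * c ∈ { r | ∃ m' α', AdmOn S 1 m T m' α' ∧ r = costT S m' α' T } := by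
    refine ⟨fun _ => m, fun _ y => α y, adm_const S h hT, ?_⟩
    have hr : runCost S (fun _ => m) (fun _ y => α y) = fun _ : ℝ => c := rfl
    rw [costT, hr, intervalIntegral.integral_const, smul_eq_mul, sub_zero]
  exact csInf_le ⟨-(B + M0) * T, fun r hr => hlb r hr⟩ hmem

end MainHelpers


/-- Proposition 1.9 of the paper.  The limit value `λ` is greater than
or equal to the ergodic value `λ̄` (recall `-λ̄ = ergInf S 1`). -/
theorem lam_ge_lambar (d : ℕ) (S : MFGSetting d) (lam : ℝ)
    (hlam : IsLimitValueU S 1 lam) :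
    -(ergInf S 1) ≤ lam := by
  have hW : ∀ r ∈ { r | ∃ m α, StatAdm 1 m α ∧
      r = (∫ y, S.Hstar (secT y) (α y) ∂(m : Measure (Td d))) + S.Fc m }, -lam ≤ r := by
    rintro r ⟨m, α, hstat, rfl⟩
    set c : ℝ := (∫ y, S.Hstar (secT y) (α y) ∂(m : Measure (Td d))) + S.Fc m with hc
    refine le_of_forall_pos_le_add fun ε hε => ?_
    obtain ⟨T₀, hT₀⟩ := hlam ε hε
    set T := max T₀ 1 with hT
    have hT1 : (1:ℝ) ≤ T := le_max_right _ _
    have hTpos : (0:ℝ) < T := lt_of_lt_of_le one_pos hT1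
    have h1 := hT₀ T (le_max_left _ _) m
    have h2 := Ufun_le_const S hstat hTpos.le
    have h3 : Ufun S 1 T m / T ≤ c := by
      rw [div_le_iff₀ hTpos]
      calc Ufun S 1 T m ≤ T * c := h2
        _ = c * T := mul_comm _ _
    have h4 : -lam - ε < Ufun S 1 T m / T := by
      have := (abs_lt.mp h1).1; linarith
    linarith
  haveI : IsProbabilityMeasure (volume : Measure (Td d)) := inferInstance
  have hstat0 : StatAdm 1 (⟨volume, inferInstance⟩ : PTd d) (fun _ => 0) := by
    refine ⟨measurable_const, by simp [sqnorm], ?_⟩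
    intro g hg hper
    have hz : ∀ y : Td d, (1:ℝ) * lapl g (secT y) - dotp (0 : Vd d) (gradv g (secT y))
        = lapl g (secT y) := by
      intro y; simp [dotp]
    calc (∫ y, ((1:ℝ) * lapl g (secT y) - dotp (0 : Vd d) (gradv g (secT y)))
          ∂((⟨volume, inferInstance⟩ : PTd d) : Measure (Td d)))
        = ∫ y, lapl g (secT y) ∂(volume : Measure (Td d)) := by
          refine integral_congr_ae (ae_of_all _ fun y => hz y)
      _ = 0 := integral_lapl_secT hg hper
  have hne : { r | ∃ m α, StatAdm 1 m α ∧
      r = (∫ y, S.Hstar (secT y) (α y) ∂(m : Measure (Td d))) + S.Fc m }.Nonempty :=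
    ⟨_, ⟨⟨volume, inferInstance⟩, fun _ => 0, hstat0, rfl⟩⟩
  have hfin : -lam ≤ ergInf S 1 := le_csInf hne hW
  linarith
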